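/- Let f be a rational map of degree d > 1 on ℙ¹(ℂ) with lift F to ℂ², and for n ∈ ℕ set T_{Fⁿ}(p) = log‖Fⁿ(p)‖ - dⁿ·log‖p‖ on ℂ²\{0}. Then T_{Fⁿ} is invariant under scalar multiplication (descends to ℙ¹), and the sequence gₙ := T_{Fⁿ}/dⁿ converges uniformly on ℂ²\{0} to a limit g_F (the dynamical Green function). -/

import Mathlib

/-!
The map `F` multiplies norms by `‖·‖ ^ d` up to a bounded factor: `T_F = log‖F‖ - d log‖·‖` is
invariant under scaling, hence bounded by its maximum on the (compact) unit sphere. Since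
`T_{F^{n+1}} = T_F ∘ Fⁿ + d T_{Fⁿ}`, consecutive terms of `T_{Fⁿ} / dⁿ` differ by at most
`C / d^{n+1}`, so the sequence is uniformly Cauchy. To use the compactness of the sphere, the lift
is transported to `EuclideanSpace ℂ (Fin 2)`, whose norm is `enorm2`.
-/

open Filter

/-- The Euclidean norm on `ℂ²`. -/
noncomputable def enorm2 (p : Fin 2 → ℂ) : ℝ :=
  Real.sqrt (‖p 0‖ ^ 2 + ‖p 1‖ ^ 2)

/-- The self-map of `ℂ²` determined by a pair of binary forms `(F₀, F₁)`. -/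
noncomputable def liftMap (F₀ F₁ : MvPolynomial (Fin 2) ℂ) (p : Fin 2 → ℂ) :
    Fin 2 → ℂ :=
  ![MvPolynomial.eval p F₀, MvPolynomial.eval p F₁]

theorem tendstoUniformlyOn_of_norm_sub_le_summable {α β : Type*} [NormedAddCommGroup β]
    [CompleteSpace β] {g : ℕ → α → β} {u : ℕ → ℝ} (hu : Summable u) {s : Set α}
    (hg : ∀ n, ∀ x ∈ s, ‖g (n + 1) x - g n x‖ ≤ u n) :
    ∃ G, TendstoUniformlyOn g G atTop s := by
  have hsum := tendstoUniformlyOn_tsum_nat hu hg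
  refine ⟨fun x => g 0 x + ∑' n, (g (n + 1) x - g n x),
    Metric.tendstoUniformlyOn_iff.2 fun ε hε => ?_⟩
  filter_upwards [Metric.tendstoUniformlyOn_iff.1 hsum ε hε] with n hn x hx
  rw [← add_sub_cancel (g 0 x) (g n x), ← Finset.sum_range_sub (g · x), dist_add_left]
  exact hn x hx

theorem iterate_ne_zero_of_ne_zero {E : Type*} [Zero E] {F : E → E} (hF : ∀ x, x ≠ 0 → F x ≠ 0)
    (n : ℕ) {x : E} (hx : x ≠ 0) : F^[n] x ≠ 0 := by
  induction n with
  | zero => exact hx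
  | succ n ih => exact Function.iterate_succ_apply' F n x ▸ hF _ ih

theorem iterate_smul_of_homogeneous {M E : Type*} [Monoid M] [MulAction M E] {F : E → E} {d : ℕ}
    (hF : ∀ (c : M) x, F (c • x) = c ^ d • F x) (n : ℕ) (c : M) (x : E) :
    F^[n] (c • x) = c ^ d ^ n • F^[n] x := by
  induction n with
  | zero => simp
  | succ n ih =>
    rw [Function.iterate_succ_apply', ih, Function.iterate_succ_apply', hF, ← pow_mul, ← pow_succ]

section LogNormDefect

variable {𝕜 E E' : Type*} [RCLike 𝕜] [NormedAddCommGroup E] [NormedSpace 𝕜 E]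
  [NormedAddCommGroup E'] [NormedSpace 𝕜 E']

/-- The paper's `T_F = log‖F‖ - k log‖·‖` for a map `F` homogeneous of degree `k`. -/
noncomputable def logNormDefect (F : E → E') (k : ℕ) (x : E) : ℝ :=
  Real.log ‖F x‖ - k * Real.log ‖x‖

theorem logNormDefect_smul {F : E → E'} {k : ℕ} (hF : ∀ (c : 𝕜) x, F (c • x) = c ^ k • F x)
    (hF0 : ∀ x, x ≠ 0 → F x ≠ 0) {c : 𝕜} (hc : c ≠ 0) {x : E} (hx : x ≠ 0) :
    logNormDefect F k (c • x) = logNormDefect F k x := by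
  have hFx : ‖F x‖ ≠ 0 := norm_ne_zero_iff.2 (hF0 x hx)
  have hc' : ‖c‖ ≠ 0 := norm_ne_zero_iff.2 hc
  simp only [logNormDefect, hF, norm_smul, norm_pow]
  rw [Real.log_mul (pow_ne_zero _ hc') hFx, Real.log_mul hc' (norm_ne_zero_iff.2 hx),
    Real.log_pow]
  ring

theorem exists_abs_logNormDefect_le [ProperSpace E] {F : E → E'} {k : ℕ} (hcont : Continuous F)
    (hF : ∀ (c : 𝕜) x, F (c • x) = c ^ k • F x) (hF0 : ∀ x, x ≠ 0 → F x ≠ 0) :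
    ∃ C, ∀ x, x ≠ 0 → |logNormDefect F k x| ≤ C := by
  have hsphere : ∀ x ∈ Metric.sphere (0 : E) 1, x ≠ 0 := fun x hx h => by simp [h] at hx
  have hcontOn : ContinuousOn (logNormDefect F k) (Metric.sphere 0 1) := by
    refine ContinuousOn.sub ?_ ?_
    · exact (hcont.norm.continuousOn).log fun x hx => norm_ne_zero_iff.2 (hF0 x (hsphere x hx))
    · exact continuousOn_const.mul
        (continuous_norm.continuousOn.log fun x hx => norm_ne_zero_iff.2 (hsphere x hx))
  obtain ⟨C, hC⟩ := (isCompact_sphere (0 : E) 1).exists_bound_of_continuousOn hcontOn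
  refine ⟨C, fun x hx => ?_⟩
  have hx' : ((‖x‖ : 𝕜))⁻¹ ≠ 0 := by simpa using hx
  rw [← logNormDefect_smul hF hF0 hx' hx, ← Real.norm_eq_abs]
  exact hC _ (by simpa using norm_smul_inv_norm (𝕜 := 𝕜) hx)

theorem logNormDefect_iterate_succ (F : E → E) (d n : ℕ) (x : E) :
    logNormDefect F^[n + 1] (d ^ (n + 1)) x =
      logNormDefect F d (F^[n] x) + d * logNormDefect F^[n] (d ^ n) x := by
  simp only [logNormDefect, Function.iterate_succ_apply', Nat.cast_pow]
  ring

theorem exists_tendstoUniformlyOn_logNormDefect_iterate_div [ProperSpace E] {F : E → E} {d : ℕ}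
    (hd : 1 < d) (hcont : Continuous F) (hF : ∀ (c : 𝕜) x, F (c • x) = c ^ d • F x)
    (hF0 : ∀ x, x ≠ 0 → F x ≠ 0) :
    ∃ g, TendstoUniformlyOn (fun n x => logNormDefect F^[n] (d ^ n) x / (d : ℝ) ^ n) g atTop
      {x | x ≠ 0} := by
  obtain ⟨C, hC⟩ := exists_abs_logNormDefect_le hcont hF hF0
  have hd' : (1 : ℝ) < d := by exact_mod_cast hd
  have hd0 : (0 : ℝ) < d := by positivity
  refine tendstoUniformlyOn_of_norm_sub_le_summable
    ((summable_geometric_of_lt_one (by positivity) (inv_lt_one_of_one_lt₀ hd')).mul_left (C / d))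
    fun n x hx => ?_
  have hstep : logNormDefect F^[n + 1] (d ^ (n + 1)) x / (d : ℝ) ^ (n + 1) -
      logNormDefect F^[n] (d ^ n) x / (d : ℝ) ^ n =
        logNormDefect F d (F^[n] x) / (d : ℝ) ^ (n + 1) := by
    rw [logNormDefect_iterate_succ]
    field_simp
    ring
  rw [hstep, Real.norm_eq_abs, abs_div, abs_of_pos (pow_pos hd0 _)]
  calc |logNormDefect F d (F^[n] x)| / (d : ℝ) ^ (n + 1)
      ≤ C / (d : ℝ) ^ (n + 1) :=
        div_le_div_of_nonneg_right (hC _ (iterate_ne_zero_of_ne_zero hF0 n hx)) (by positivity)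
    _ = C / d * (d : ℝ)⁻¹ ^ n := by
        rw [inv_pow, pow_succ']
        field_simp

end LogNormDefect

theorem MvPolynomial.IsHomogeneous.eval_smul {σ R : Type*} [Fintype σ] [CommSemiring R]
    {φ : MvPolynomial σ R} {d : ℕ} (h : φ.IsHomogeneous d) (c : R) (p : σ → R) :
    MvPolynomial.eval (c • p) φ = c ^ d * MvPolynomial.eval p φ := by
  rw [MvPolynomial.eval_eq', MvPolynomial.eval_eq', Finset.mul_sum]
  refine Finset.sum_congr rfl fun m hm => ?_
  have hdeg : ∑ i, m i = d := by
    rw [← h (MvPolynomial.mem_support_iff.mp hm), Finsupp.weight_apply, Finsupp.sum_fintype] <;>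
      simp
  simp only [Pi.smul_apply, smul_eq_mul, mul_pow, Finset.prod_mul_distrib,
    Finset.prod_pow_eq_pow_sum, hdeg]
  ring

theorem liftMap_smul {d : ℕ} {F₀ F₁ : MvPolynomial (Fin 2) ℂ}
    (h₀ : F₀.IsHomogeneous d) (h₁ : F₁.IsHomogeneous d) (c : ℂ) (p : Fin 2 → ℂ) :
    liftMap F₀ F₁ (c • p) = c ^ d • liftMap F₀ F₁ p := by
  ext i
  fin_cases i <;> simp [liftMap, h₀.eval_smul, h₁.eval_smul]

theorem continuous_liftMap (F₀ F₁ : MvPolynomial (Fin 2) ℂ) : Continuous (liftMap F₀ F₁) :=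
  continuous_pi fun i => by fin_cases i <;> exact MvPolynomial.continuous_eval _

theorem enorm2_eq_norm_toLp (p : Fin 2 → ℂ) :
    enorm2 p = ‖(WithLp.toLp 2 p : EuclideanSpace ℂ (Fin 2))‖ := by
  rw [EuclideanSpace.norm_eq, Fin.sum_univ_two]
  rfl

noncomputable def euclideanLiftMap (F₀ F₁ : MvPolynomial (Fin 2) ℂ) :
    EuclideanSpace ℂ (Fin 2) → EuclideanSpace ℂ (Fin 2) :=
  fun x => WithLp.toLp 2 (liftMap F₀ F₁ x.ofLp)

theorem euclideanLiftMap_smul {d : ℕ} {F₀ F₁ : MvPolynomial (Fin 2) ℂ}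
    (h₀ : F₀.IsHomogeneous d) (h₁ : F₁.IsHomogeneous d) (c : ℂ) (x : EuclideanSpace ℂ (Fin 2)) :
    euclideanLiftMap F₀ F₁ (c • x) = c ^ d • euclideanLiftMap F₀ F₁ x := by
  simp only [euclideanLiftMap, WithLp.ofLp_smul, liftMap_smul h₀ h₁, WithLp.toLp_smul]

theorem euclideanLiftMap_ne_zero {F₀ F₁ : MvPolynomial (Fin 2) ℂ}
    (hnz : ∀ p : Fin 2 → ℂ, p ≠ 0 → liftMap F₀ F₁ p ≠ 0) {x : EuclideanSpace ℂ (Fin 2)}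
    (hx : x ≠ 0) : euclideanLiftMap F₀ F₁ x ≠ 0 := by
  simpa [euclideanLiftMap] using hnz x.ofLp (by simpa using hx)

theorem continuous_euclideanLiftMap (F₀ F₁ : MvPolynomial (Fin 2) ℂ) :
    Continuous (euclideanLiftMap F₀ F₁) :=
  (PiLp.continuous_toLp 2 _).comp ((continuous_liftMap F₀ F₁).comp (PiLp.continuous_ofLp 2 _))

theorem euclideanLiftMap_iterate_toLp (F₀ F₁ : MvPolynomial (Fin 2) ℂ) (n : ℕ) (p : Fin 2 → ℂ) :
    (euclideanLiftMap F₀ F₁)^[n] (WithLp.toLp 2 p) = WithLp.toLp 2 ((liftMap F₀ F₁)^[n] p) :=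
  (Function.Semiconj.iterate_right (f := WithLp.toLp 2) (ga := liftMap F₀ F₁)
    (gb := euclideanLiftMap F₀ F₁) (fun _ => rfl) n p).symm

theorem log_enorm2_iterate_sub (F₀ F₁ : MvPolynomial (Fin 2) ℂ) (d n : ℕ) (p : Fin 2 → ℂ) :
    Real.log (enorm2 ((liftMap F₀ F₁)^[n] p)) - (d : ℝ) ^ n * Real.log (enorm2 p) =
      logNormDefect (euclideanLiftMap F₀ F₁)^[n] (d ^ n) (WithLp.toLp 2 p) := by
  rw [logNormDefect, euclideanLiftMap_iterate_toLp, enorm2_eq_norm_toLp, enorm2_eq_norm_toLp,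
    Nat.cast_pow]

/-- For a lift `F` of a rational map of degree `d > 1`, `T_{Fⁿ} = log‖Fⁿ‖ - dⁿ log‖·‖` is
invariant under scalar multiplication (hence descends to `ℙ¹(ℂ)`), and `T_{Fⁿ}/dⁿ`
converges uniformly on `ℂ² \ {0}` to the dynamical Green function `g_F`. -/
theorem stmt_11 (d : ℕ) (hd : 1 < d) (F₀ F₁ : MvPolynomial (Fin 2) ℂ)
    (h₀ : F₀.IsHomogeneous d) (h₁ : F₁.IsHomogeneous d)
    (hnz : ∀ p : Fin 2 → ℂ, p ≠ 0 → liftMap F₀ F₁ p ≠ 0) :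
    (∀ (n : ℕ) (c : ℂ) (p : Fin 2 → ℂ), c ≠ 0 → p ≠ 0 →
        Real.log (enorm2 ((liftMap F₀ F₁)^[n] (c • p))) -
            (d : ℝ) ^ n * Real.log (enorm2 (c • p)) =
          Real.log (enorm2 ((liftMap F₀ F₁)^[n] p)) -
            (d : ℝ) ^ n * Real.log (enorm2 p)) ∧
      ∃ gF : (Fin 2 → ℂ) → ℝ,
        TendstoUniformlyOn
          (fun (n : ℕ) (p : Fin 2 → ℂ) =>
            (Real.log (enorm2 ((liftMap F₀ F₁)^[n] p)) -
                (d : ℝ) ^ n * Real.log (enorm2 p)) / (d : ℝ) ^ n)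
          gF atTop {p : Fin 2 → ℂ | p ≠ 0} := by
  have hG := euclideanLiftMap_smul h₀ h₁
  have hG0 : ∀ x, x ≠ 0 → euclideanLiftMap F₀ F₁ x ≠ 0 := fun _ => euclideanLiftMap_ne_zero hnz
  refine ⟨fun n c p hc hp => ?_, ?_⟩
  · simp only [log_enorm2_iterate_sub, WithLp.toLp_smul]
    exact logNormDefect_smul (iterate_smul_of_homogeneous hG n)
      (fun _ => iterate_ne_zero_of_ne_zero hG0 n) hc (by simpa using hp)
  · obtain ⟨g, hg⟩ := exists_tendstoUniformlyOn_logNormDefect_iterate_div hd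
      (continuous_euclideanLiftMap F₀ F₁) hG hG0
    refine ⟨g ∘ WithLp.toLp 2, ?_⟩
    simpa [log_enorm2_iterate_sub, Function.comp_def] using hg.comp (WithLp.toLp 2)
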